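/- arXiv:2002.11921 — 3 statements merged into one kernel-verified Lean document; each statement's English description precedes it below -/
import Mathlib

section
/- Consider outputs indexed by [m]×[n] where output (i,j) depends on intermediate-layer nodes x_{i',j'} for i' ∈ {i-k,...,i+k}, j' ∈ {j-k,...,j+k} (k ≥ 1), and an execution order in which, once an intermediate node is computed, it must be retained in memory until all outputs depending on it are computed. Suppose at some point in the execution, for each column j in a set C ⊆ [n] of size n-1, the set of computed outputs in column j is a nonempty proper subset of [m]. Then at least 2k·(n-1) distinct intermediate nodes must be simultaneously resident in memory, because the 2k contiguous nodes required for distinct columns j ∈ C are pairwise disjoint (they have distinct second coordinates). -/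
lemma boundary (S : Finset ℤ) : ∀ d : ℕ, ∀ a b : ℤ, (b - a).natAbs = d → a ∈ S → b ∉ S →
    ∃ r r', r ∈ S ∧ r' ∉ S ∧ (r - r').natAbs = 1 ∧
      min a b ≤ r' ∧ r' ≤ max a b := by
  intro d
  induction d using Nat.strong_induction_on with
  | _ d ih =>
    intro a b hd ha hb
    rcases lt_trichotomy a b with h | h | h
    · by_cases h1 : a + 1 ∈ S
      · have hlt : (b - (a+1)).natAbs < d := by omega
        obtain ⟨r, r', hr, hr', habs, h2, h3⟩ := ih _ hlt (a+1) b rfl h1 hb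
        have hab : a + 1 ≤ b := by omega
        exact ⟨r, r', hr, hr', habs, by simp [min_def, max_def] at h2 h3 ⊢ <;> omega,
          by simp [min_def, max_def] at h2 h3 ⊢ <;> omega⟩
      · exact ⟨a, a+1, ha, h1, by omega, by omega, by omega⟩
    · exact absurd (h ▸ ha) hb
    · by_cases h1 : a - 1 ∈ S
      · have hlt : (b - (a-1)).natAbs < d := by omega
        obtain ⟨r, r', hr, hr', habs, h2, h3⟩ := ih _ hlt (a-1) b rfl h1 hb
        exact ⟨r, r', hr, hr', habs, by simp [min_def, max_def] at h2 h3 ⊢ <;> omega,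
          by simp [min_def, max_def] at h2 h3 ⊢ <;> omega⟩
      · exact ⟨a, a-1, ha, h1, by omega, by omega, by omega⟩

/-- If in n-1 columns the computed outputs form a nonempty proper
subset of the m rows, then at least 2k(n-1) intermediate nodes must be resident
in memory, where a node must be resident whenever it is a dependency (within
radius k) of a computed output and of a not-yet-computed output. -/
theorem stmt_3 (m n k : ℕ) (hm : 2 ≤ m) (hn : 1 ≤ n) (hk : 1 ≤ k)
    (computed : Finset (ℤ × ℤ))
    (hcomp : computed ⊆ Finset.Icc 1 (m : ℤ) ×ˢ Finset.Icc 1 (n : ℤ))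
    (M : Finset (ℤ × ℤ))
    (hM : ∀ p ∈ computed, ∀ x : ℤ × ℤ,
      |x.1 - p.1| ≤ (k : ℤ) → |x.2 - p.2| ≤ (k : ℤ) →
      (∃ q ∈ (Finset.Icc 1 (m : ℤ) ×ˢ Finset.Icc 1 (n : ℤ)) \ computed,
        |x.1 - q.1| ≤ (k : ℤ) ∧ |x.2 - q.2| ≤ (k : ℤ)) → x ∈ M)
    (C : Finset ℤ) (hC : C ⊆ Finset.Icc 1 (n : ℤ)) (hCcard : C.card = n - 1)
    (hcol : ∀ j ∈ C, (computed.filter (fun p => p.2 = j)).Nonempty ∧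
      (computed.filter (fun p => p.2 = j)).image Prod.fst ≠ Finset.Icc 1 (m : ℤ)) :
    2 * k * (n - 1) ≤ M.card := by
  have key : ∀ j ∈ C, 2 * k ≤ (M.filter (fun p => p.2 = j)).card := by
    intro j hj
    obtain ⟨hne, hprop⟩ := hcol j hj
    set S : Finset ℤ := (computed.filter (fun p => p.2 = j)).image Prod.fst with hS
    -- S ⊆ Icc 1 m
    have hSsub : S ⊆ Finset.Icc 1 (m : ℤ) := by
      intro r hr
      simp only [hS, Finset.mem_image, Finset.mem_filter] at hr
      obtain ⟨p, ⟨hpc, _⟩, hp1⟩ := hr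
      have := hcomp hpc
      rw [Finset.mem_product] at this
      exact hp1 ▸ this.1
    obtain ⟨p0, hp0⟩ := hne
    rw [Finset.mem_filter] at hp0
    have ha : p0.1 ∈ S := Finset.mem_image_of_mem _ (Finset.mem_filter.mpr hp0)
    obtain ⟨b, hbm, hbS⟩ : ∃ b ∈ Finset.Icc 1 (m : ℤ), b ∉ S := by
      by_contra hcon
      push_neg at hcon
      exact hprop (Finset.Subset.antisymm hSsub hcon)
    obtain ⟨r, r', hr, hr', habs, hmin, hmax⟩ := boundary S _ p0.1 b rfl ha hbS
    -- r ∈ Icc 1 m, r' ∈ Icc 1 m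
    have hrm := hSsub hr
    have ham := hSsub ha
    rw [Finset.mem_Icc] at hrm ham hbm
    have hr'm : (1:ℤ) ≤ r' ∧ r' ≤ m := by
      constructor <;> [skip; skip] <;>
        simp [min_def, max_def] at hmin hmax <;> omega
    -- (r, j) ∈ computed
    have hrc : ((r, j) : ℤ × ℤ) ∈ computed := by
      simp only [hS, Finset.mem_image, Finset.mem_filter] at hr
      obtain ⟨p, ⟨hpc, hpj⟩, hp1⟩ := hr
      have : p = (r, j) := Prod.ext hp1 hpj
      exact this ▸ hpc
    have hjn : j ∈ Finset.Icc 1 (n:ℤ) := hC hj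
    have hr'nc : ((r', j) : ℤ × ℤ) ∉ computed := by
      intro hcon
      have : ((r', j) : ℤ × ℤ) ∈ computed.filter (fun p => p.2 = j) :=
        Finset.mem_filter.mpr ⟨hcon, rfl⟩
      exact hr' (Finset.mem_image_of_mem _ this)
    -- the 2k nodes
    have hsub : (Finset.Icc (max r r' - k) (min r r' + k)).image (fun t => ((t, j) : ℤ × ℤ))
        ⊆ M.filter (fun p => p.2 = j) := by
      intro x hx
      simp only [Finset.mem_image, Finset.mem_Icc] at hx
      obtain ⟨t, ⟨ht1, ht2⟩, rfl⟩ := hx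
      refine Finset.mem_filter.mpr ⟨?_, rfl⟩
      refine hM (r, j) hrc (t, j) ?_ ?_ ⟨(r', j), ?_, ?_, ?_⟩
      · simp only
        rw [abs_le]
        simp [max_def, min_def] at ht1 ht2 <;> omega
      · simp
      · rw [Finset.mem_sdiff, Finset.mem_product, Finset.mem_Icc, Finset.mem_Icc]
        exact ⟨⟨hr'm, Finset.mem_Icc.mp hjn⟩, hr'nc⟩
      · simp only
        rw [abs_le]
        simp [max_def, min_def] at ht1 ht2 <;> omega
      · simp
    have hcard : ((Finset.Icc (max r r' - k) (min r r' + k)).image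
        (fun t => ((t, j) : ℤ × ℤ))).card = 2 * k := by
      rw [Finset.card_image_of_injective _ (fun a b h => by simpa using h)]
      rw [Int.card_Icc]
      simp [max_def, min_def] <;> omega
    calc 2 * k = _ := hcard.symm
      _ ≤ _ := Finset.card_le_card hsub
  -- sum up over disjoint columns
  have hdisj : (C : Set ℤ).PairwiseDisjoint (fun j => M.filter (fun p => p.2 = j)) := by
    intro j₁ _ j₂ _ hne
    refine Finset.disjoint_left.mpr ?_
    intro p hp1 hp2
    rw [Finset.mem_filter] at hp1 hp2
    exact hne (hp1.2 ▸ hp2.2)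
  calc 2 * k * (n - 1) = ∑ _j ∈ C, 2 * k := by
        rw [Finset.sum_const, hCcard, smul_eq_mul]; ring
    _ ≤ ∑ j ∈ C, (M.filter (fun p => p.2 = j)).card := Finset.sum_le_sum key
    _ = (C.biUnion (fun j => M.filter (fun p => p.2 = j))).card :=
        (Finset.card_biUnion (fun j₁ h₁ j₂ h₂ h => hdisj h₁ h₂ h)).symm
    _ ≤ M.card := Finset.card_le_card (Finset.biUnion_subset.mpr
        (fun j _ => Finset.filter_subset _ _))
end

section
/- Consider an l-layer (l > 1) convolutional network with a final output layer of size m×n (m,n ≥ 2), where each output node's receptive field in intermediate layer q ∈ {1,...,l-1} has size (2k_q+1)×(2k_q+1) with k_q > 0, layer q has c_q channels and stride 1, and recomputation of intermediate nodes is disallowed (once computed, an intermediate node stays in memory until all outputs depending on it are computed). Then any serial execution order requires, at some point, at least 2·(Σ_{q=1}^{l-1} c_q k_q)·min(m-1, n-1) units of memory for intermediate-layer nodes. -/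
private lemma boundary_aux (m : ℕ) (g : ℕ → Prop) (i0 i1 : ℕ) (h0 : i0 < m) (h1 : i1 < m)
    (hg0 : g i0) (hg1 : ¬ g i1) :
    ∃ i, i + 1 < m ∧ ((g i ∧ ¬ g (i+1)) ∨ (¬ g i ∧ g (i+1))) := by
  by_contra h
  push_neg at h
  have key : ∀ i, i < m → (g i ↔ g 0) := by
    intro i
    induction i with
    | zero => exact fun _ => Iff.rfl
    | succ i ih =>
      intro hi
      have h2 := h i (by omega)
      have hiff : g i ↔ g (i+1) := by tauto
      exact hiff.symm.trans (ih (by omega))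
  exact hg1 ((key i1 h1).mpr ((key i0 h0).mp hg0))

private lemma bigstep (m N k : ℕ) (S : Finset (ℤ × ℤ)) (node : ℕ → ℤ → ℤ × ℤ)
    (hnode : ∀ j1 x1 j2 x2, node j1 x1 = node j2 x2 → j1 = j2 ∧ x1 = x2)
    (done : ℕ → ℕ → Prop)
    (hS : ∀ i j, i + 1 < m → j < N →
      ((done i j ∧ ¬ done (i+1) j) ∨ (¬ done i j ∧ done (i+1) j)) →
      ∀ x ∈ Finset.Icc ((i:ℤ) + 2 - k) ((i:ℤ) + 1 + k), node j x ∈ S)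
    (hrow : ∃ i0, i0 < m ∧ ∀ j, j < N → done i0 j)
    (J : Finset ℕ) (hJN : ∀ j ∈ J, j < N)
    (hJ : ∀ j ∈ J, ∃ i, i < m ∧ ¬ done i j) :
    J.card * (2 * k) ≤ S.card := by
  classical
  obtain ⟨i0, hi0m, hi0⟩ := hrow
  have hb : ∀ j ∈ J, ∃ i, i + 1 < m ∧
      ((done i j ∧ ¬ done (i+1) j) ∨ (¬ done i j ∧ done (i+1) j)) := by
    intro j hj
    obtain ⟨i1, hi1m, hi1⟩ := hJ j hj
    exact boundary_aux m (fun i => done i j) i0 i1 hi0m hi1m (hi0 j (hJN j hj)) hi1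
  choose! ii h1 h2 using hb
  have hdisj : ∀ j1 ∈ J, ∀ j2 ∈ J, j1 ≠ j2 →
      Disjoint ((Finset.Icc ((ii j1 : ℤ) + 2 - k) ((ii j1 : ℤ) + 1 + k)).image (fun x => node j1 x))
        ((Finset.Icc ((ii j2 : ℤ) + 2 - k) ((ii j2 : ℤ) + 1 + k)).image (fun x => node j2 x)) := by
    intro j1 _ j2 _ hne
    simp only [Finset.disjoint_left, Finset.mem_image]
    rintro p ⟨x1, hx1, rfl⟩ ⟨x2, hx2, heq⟩
    exact hne ((hnode j2 x2 j1 x1 heq).1).symm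
  have hTS : (J.biUnion (fun j =>
      (Finset.Icc ((ii j : ℤ) + 2 - k) ((ii j : ℤ) + 1 + k)).image (fun x => node j x))) ⊆ S := by
    intro p hp
    rw [Finset.mem_biUnion] at hp
    obtain ⟨j, hj, hp⟩ := hp
    rw [Finset.mem_image] at hp
    obtain ⟨x, hx, rfl⟩ := hp
    exact hS (ii j) j (h1 j hj) (hJN j hj) (h2 j hj) x hx
  have hcard : (J.biUnion (fun j =>
      (Finset.Icc ((ii j : ℤ) + 2 - k) ((ii j : ℤ) + 1 + k)).image (fun x => node j x))).card
      = J.card * (2 * k) := by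
    rw [Finset.card_biUnion hdisj]
    have hone : ∀ j ∈ J,
        ((Finset.Icc ((ii j : ℤ) + 2 - k) ((ii j : ℤ) + 1 + k)).image (fun x => node j x)).card
        = 2 * k := by
      intro j hj
      rw [Finset.card_image_of_injective _ (fun x1 x2 h => (hnode j x1 j x2 h).2)]
      rw [Int.card_Icc]
      omega
    rw [Finset.sum_congr rfl hone, Finset.sum_const, smul_eq_mul]
  calc J.card * (2 * k) = _ := hcard.symm
    _ ≤ S.card := Finset.card_le_card hTS

/-- Proposition 1: For an l-layer stride-1 convolutional network
with m×n output, receptive-field radii k_q > 0 and channel counts c_q at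
intermediate layers q = 1,...,l-1, any serial execution order (enumeration π of
the output nodes) has, at some point t, at least 2(Σ c_q k_q)·min(m-1,n-1)
intermediate nodes that are dependencies of a computed output and of a
not-yet-computed output (hence must be simultaneously in memory). -/
theorem stmt_4 (l m n : ℕ) (hl : 1 < l) (hm : 2 ≤ m) (hn : 2 ≤ n)
    (c k : ℕ → ℕ) (hk : ∀ q ∈ Finset.Icc 1 (l - 1), 0 < k q)
    (π : Fin (m * n) ≃ Fin m × Fin n) :
    ∃ t ≤ m * n,
      2 * (∑ q ∈ Finset.Icc 1 (l - 1), c q * k q) * min (m - 1) (n - 1) ≤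
        ∑ q ∈ Finset.Icc 1 (l - 1), c q *
          ((Finset.Icc (1 - (k q : ℤ)) ((m : ℤ) + k q) ×ˢ
            Finset.Icc (1 - (k q : ℤ)) ((n : ℤ) + k q)).filter
            (fun x =>
              (∃ τ : Fin (m * n), τ.val < t ∧
                |x.1 - (((π τ).1.val : ℤ) + 1)| ≤ (k q : ℤ) ∧
                |x.2 - (((π τ).2.val : ℤ) + 1)| ≤ (k q : ℤ)) ∧
              (∃ τ : Fin (m * n), ¬ τ.val < t ∧
                |x.1 - (((π τ).1.val : ℤ) + 1)| ≤ (k q : ℤ) ∧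
                |x.2 - (((π τ).2.val : ℤ) + 1)| ≤ (k q : ℤ)))).card := by
  classical
  have hm0 : 0 < m := by omega
  have hn0 : 0 < n := by omega
  set f : Fin m × Fin n → ℕ := fun p => (π.symm p).val with hfdef
  have hfinj : Function.Injective f := by
    intro p q h
    exact π.symm.injective (Fin.val_injective h)
  have hQex : ∃ s, (∃ i : Fin m, ∀ j : Fin n, f (i, j) < s) ∨
      (∃ j : Fin n, ∀ i : Fin m, f (i, j) < s) :=
    ⟨m * n, Or.inl ⟨⟨0, hm0⟩, fun j => (π.symm _).isLt⟩⟩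
  set t := Nat.find hQex with htdef
  have htQ := Nat.find_spec hQex
  have htle : t ≤ m * n := Nat.find_le (Or.inl ⟨⟨0, hm0⟩, fun j => (π.symm _).isLt⟩)
  have ht0 : 0 < t := by
    rcases htQ with ⟨i, hi⟩ | ⟨j, hj⟩
    · have := hi ⟨0, hn0⟩; omega
    · have := hj ⟨0, hm0⟩; omega
  have htmin := Nat.find_min hQex (show t - 1 < t by omega)
  set D : ℕ → ℕ → Prop := fun i j => ∃ p : Fin m × Fin n, p.1.val = i ∧ p.2.val = j ∧ f p < t
    with hD
  push_neg at htmin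
  obtain ⟨htminR, htminC⟩ := htmin
  -- main per-layer bound
  have main : ∀ (k' : ℕ) (S : Finset (ℤ × ℤ)),
      (∀ z : ℤ × ℤ, 1 - (k' : ℤ) ≤ z.1 → z.1 ≤ (m : ℤ) + k' →
        1 - (k' : ℤ) ≤ z.2 → z.2 ≤ (n : ℤ) + k' →
        (∃ p : Fin m × Fin n, f p < t ∧ |z.1 - ((p.1.val : ℤ) + 1)| ≤ (k' : ℤ) ∧
          |z.2 - ((p.2.val : ℤ) + 1)| ≤ (k' : ℤ)) →
        (∃ p : Fin m × Fin n, ¬ f p < t ∧ |z.1 - ((p.1.val : ℤ) + 1)| ≤ (k' : ℤ) ∧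
          |z.2 - ((p.2.val : ℤ) + 1)| ≤ (k' : ℤ)) →
        z ∈ S) →
      min (m - 1) (n - 1) * (2 * k') ≤ S.card := by
    intro k' S hmem
    rcases htQ with ⟨i0, hrow⟩ | ⟨j0, hcol⟩
    · -- complete row at time t
      have hrowD : ∃ i1, i1 < m ∧ ∀ j, j < n → D i1 j :=
        ⟨i0.val, i0.isLt, fun j hj => ⟨(i0, ⟨j, hj⟩), rfl, rfl, hrow ⟨j, hj⟩⟩⟩
      have hcompl : ((Finset.range n).filter (fun j => ¬ ∃ i, i < m ∧ ¬ D i j)).card ≤ 1 := by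
        rw [Finset.card_le_one]
        intro j1 hj1 j2 hj2
        simp only [Finset.mem_filter, Finset.mem_range] at hj1 hj2
        push_neg at hj1 hj2
        obtain ⟨hj1n, hD1⟩ := hj1
        obtain ⟨hj2n, hD2⟩ := hj2
        obtain ⟨i1, hi1⟩ := htminC ⟨j1, hj1n⟩
        obtain ⟨i2, hi2⟩ := htminC ⟨j2, hj2n⟩
        have e1 : f (i1, ⟨j1, hj1n⟩) < t := by
          obtain ⟨⟨p1, p2⟩, hp1, hp2, hp3⟩ := hD1 i1.val i1.isLt
          have ha : p1 = i1 := Fin.val_injective hp1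
          have hb : p2 = ⟨j1, hj1n⟩ := Fin.val_injective hp2
          rw [ha, hb] at hp3; exact hp3
        have e2 : f (i2, ⟨j2, hj2n⟩) < t := by
          obtain ⟨⟨p1, p2⟩, hp1, hp2, hp3⟩ := hD2 i2.val i2.isLt
          have ha : p1 = i2 := Fin.val_injective hp1
          have hb : p2 = ⟨j2, hj2n⟩ := Fin.val_injective hp2
          rw [ha, hb] at hp3; exact hp3
        have hf1 : f (i1, ⟨j1, hj1n⟩) = t - 1 := by omega
        have hf2 : f (i2, ⟨j2, hj2n⟩) = t - 1 := by omega
        have hpp := hfinj (hf1.trans hf2.symm)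
        exact congrArg (fun p : Fin m × Fin n => p.2.val) hpp
      have hJcard : n - 1 ≤ ((Finset.range n).filter (fun j => ∃ i, i < m ∧ ¬ D i j)).card := by
        have := Finset.card_filter_add_card_filter_not
          (s := Finset.range n) (p := fun j => ∃ i, i < m ∧ ¬ D i j)
        rw [Finset.card_range] at this
        omega
      have hS : ∀ i j, i + 1 < m → j < n →
          ((D i j ∧ ¬ D (i+1) j) ∨ (¬ D i j ∧ D (i+1) j)) →
          ∀ x ∈ Finset.Icc ((i:ℤ) + 2 - k') ((i:ℤ) + 1 + k'),
            ((x, (j:ℤ)+1) : ℤ × ℤ) ∈ S := by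
        intro i j him hjn hpair x hx
        rw [Finset.mem_Icc] at hx
        obtain ⟨hx1, hx2⟩ := hx
        have hc' : ∃ p : Fin m × Fin n, f p < t ∧ |x - ((p.1.val : ℤ) + 1)| ≤ (k' : ℤ) ∧
            |(j:ℤ)+1 - ((p.2.val : ℤ) + 1)| ≤ (k' : ℤ) := by
          rcases hpair with ⟨hd, _⟩ | ⟨_, hd⟩ <;>
          · obtain ⟨p, hp1, hp2, hp3⟩ := hd
            exact ⟨p, hp3, abs_le.mpr ⟨by omega, by omega⟩, abs_le.mpr ⟨by omega, by omega⟩⟩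
        have hu' : ∃ p : Fin m × Fin n, ¬ f p < t ∧ |x - ((p.1.val : ℤ) + 1)| ≤ (k' : ℤ) ∧
            |(j:ℤ)+1 - ((p.2.val : ℤ) + 1)| ≤ (k' : ℤ) := by
          rcases hpair with ⟨_, hnd⟩ | ⟨hnd, _⟩
          · set pu : Fin m × Fin n := (⟨i+1, him⟩, ⟨j, hjn⟩) with hpu
            have hpu1 : (pu.1 : ℕ) = i + 1 := rfl
            have hpu2 : (pu.2 : ℕ) = j := rfl
            refine ⟨pu, fun hcon => hnd ⟨pu, hpu1, hpu2, hcon⟩,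
              abs_le.mpr ⟨by omega, by omega⟩, abs_le.mpr ⟨by omega, by omega⟩⟩
          · set pu : Fin m × Fin n := (⟨i, by omega⟩, ⟨j, hjn⟩) with hpu
            have hpu1 : (pu.1 : ℕ) = i := rfl
            have hpu2 : (pu.2 : ℕ) = j := rfl
            refine ⟨pu, fun hcon => hnd ⟨pu, hpu1, hpu2, hcon⟩,
              abs_le.mpr ⟨by omega, by omega⟩, abs_le.mpr ⟨by omega, by omega⟩⟩
        exact hmem (x, (j:ℤ)+1) (show (1:ℤ) - k' ≤ x by omega) (show x ≤ (m:ℤ) + k' by omega)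
          (show (1:ℤ) - k' ≤ (j:ℤ) + 1 by omega) (show (j:ℤ) + 1 ≤ (n:ℤ) + k' by omega) hc' hu'
      have hbig := bigstep m n k' S (fun j x => (x, (j:ℤ)+1))
        (by
          intro j1 x1 j2 x2 h
          rw [Prod.mk.injEq] at h
          refine ⟨?_, h.1⟩
          have := h.2; omega)
        D hS hrowD ((Finset.range n).filter (fun j => ∃ i, i < m ∧ ¬ D i j))
        (fun j hj => Finset.mem_range.mp (Finset.mem_filter.mp hj).1)
        (fun j hj => (Finset.mem_filter.mp hj).2)
      calc min (m - 1) (n - 1) * (2 * k')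
          ≤ ((Finset.range n).filter (fun j => ∃ i, i < m ∧ ¬ D i j)).card * (2 * k') :=
            Nat.mul_le_mul (by omega) le_rfl
        _ ≤ S.card := hbig
    · -- complete column at time t
      have hrowD : ∃ j1, j1 < n ∧ ∀ i, i < m → D i j1 :=
        ⟨j0.val, j0.isLt, fun i hi => ⟨(⟨i, hi⟩, j0), rfl, rfl, hcol ⟨i, hi⟩⟩⟩
      have hcompl : ((Finset.range m).filter (fun i => ¬ ∃ j, j < n ∧ ¬ D i j)).card ≤ 1 := by
        rw [Finset.card_le_one]
        intro i1 hi1 i2 hi2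
        simp only [Finset.mem_filter, Finset.mem_range] at hi1 hi2
        push_neg at hi1 hi2
        obtain ⟨hi1m, hD1⟩ := hi1
        obtain ⟨hi2m, hD2⟩ := hi2
        obtain ⟨j1, hj1⟩ := htminR ⟨i1, hi1m⟩
        obtain ⟨j2, hj2⟩ := htminR ⟨i2, hi2m⟩
        have e1 : f (⟨i1, hi1m⟩, j1) < t := by
          obtain ⟨⟨p1, p2⟩, hp1, hp2, hp3⟩ := hD1 j1.val j1.isLt
          have ha : p1 = ⟨i1, hi1m⟩ := Fin.val_injective hp1
          have hb : p2 = j1 := Fin.val_injective hp2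
          rw [ha, hb] at hp3; exact hp3
        have e2 : f (⟨i2, hi2m⟩, j2) < t := by
          obtain ⟨⟨p1, p2⟩, hp1, hp2, hp3⟩ := hD2 j2.val j2.isLt
          have ha : p1 = ⟨i2, hi2m⟩ := Fin.val_injective hp1
          have hb : p2 = j2 := Fin.val_injective hp2
          rw [ha, hb] at hp3; exact hp3
        have hf1 : f (⟨i1, hi1m⟩, j1) = t - 1 := by omega
        have hf2 : f (⟨i2, hi2m⟩, j2) = t - 1 := by omega
        have hpp := hfinj (hf1.trans hf2.symm)
        exact congrArg (fun p : Fin m × Fin n => p.1.val) hpp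
      have hJcard : m - 1 ≤ ((Finset.range m).filter (fun i => ∃ j, j < n ∧ ¬ D i j)).card := by
        have := Finset.card_filter_add_card_filter_not
          (s := Finset.range m) (p := fun i => ∃ j, j < n ∧ ¬ D i j)
        rw [Finset.card_range] at this
        omega
      have hS : ∀ a b, a + 1 < n → b < m →
          (((fun a b => D b a) a b ∧ ¬ (fun a b => D b a) (a+1) b) ∨
            (¬ (fun a b => D b a) a b ∧ (fun a b => D b a) (a+1) b)) →
          ∀ x ∈ Finset.Icc ((a:ℤ) + 2 - k') ((a:ℤ) + 1 + k'),
            (((b:ℤ)+1, x) : ℤ × ℤ) ∈ S := by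
        intro a b han hbm hpair x hx
        rw [Finset.mem_Icc] at hx
        obtain ⟨hx1, hx2⟩ := hx
        simp only at hpair
        have hc' : ∃ p : Fin m × Fin n, f p < t ∧ |(b:ℤ)+1 - ((p.1.val : ℤ) + 1)| ≤ (k' : ℤ) ∧
            |x - ((p.2.val : ℤ) + 1)| ≤ (k' : ℤ) := by
          rcases hpair with ⟨hd, _⟩ | ⟨_, hd⟩ <;>
          · obtain ⟨p, hp1, hp2, hp3⟩ := hd
            exact ⟨p, hp3, abs_le.mpr ⟨by omega, by omega⟩, abs_le.mpr ⟨by omega, by omega⟩⟩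
        have hu' : ∃ p : Fin m × Fin n, ¬ f p < t ∧ |(b:ℤ)+1 - ((p.1.val : ℤ) + 1)| ≤ (k' : ℤ) ∧
            |x - ((p.2.val : ℤ) + 1)| ≤ (k' : ℤ) := by
          rcases hpair with ⟨_, hnd⟩ | ⟨hnd, _⟩
          · set pu : Fin m × Fin n := (⟨b, hbm⟩, ⟨a+1, han⟩) with hpu
            have hpu1 : (pu.1 : ℕ) = b := rfl
            have hpu2 : (pu.2 : ℕ) = a + 1 := rfl
            refine ⟨pu, fun hcon => hnd ⟨pu, hpu1, hpu2, hcon⟩,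
              abs_le.mpr ⟨by omega, by omega⟩, abs_le.mpr ⟨by omega, by omega⟩⟩
          · set pu : Fin m × Fin n := (⟨b, hbm⟩, ⟨a, by omega⟩) with hpu
            have hpu1 : (pu.1 : ℕ) = b := rfl
            have hpu2 : (pu.2 : ℕ) = a := rfl
            refine ⟨pu, fun hcon => hnd ⟨pu, hpu1, hpu2, hcon⟩,
              abs_le.mpr ⟨by omega, by omega⟩, abs_le.mpr ⟨by omega, by omega⟩⟩
        exact hmem ((b:ℤ)+1, x) (show (1:ℤ) - k' ≤ (b:ℤ)+1 by omega)
          (show (b:ℤ)+1 ≤ (m:ℤ) + k' by omega)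
          (show (1:ℤ) - k' ≤ x by omega) (show x ≤ (n:ℤ) + k' by omega) hc' hu'
      have hbig := bigstep n m k' S (fun b x => ((b:ℤ)+1, x))
        (by
          intro j1 x1 j2 x2 h
          rw [Prod.mk.injEq] at h
          refine ⟨?_, h.2⟩
          have := h.1; omega)
        (fun a b => D b a) hS hrowD
        ((Finset.range m).filter (fun i => ∃ j, j < n ∧ ¬ D i j))
        (fun i hi => Finset.mem_range.mp (Finset.mem_filter.mp hi).1)
        (fun i hi => (Finset.mem_filter.mp hi).2)
      calc min (m - 1) (n - 1) * (2 * k')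
          ≤ ((Finset.range m).filter (fun i => ∃ j, j < n ∧ ¬ D i j)).card * (2 * k') :=
            Nat.mul_le_mul (by omega) le_rfl
        _ ≤ S.card := hbig
  refine ⟨t, htle, ?_⟩
  have hL : 2 * (∑ q ∈ Finset.Icc 1 (l - 1), c q * k q) * min (m - 1) (n - 1)
      = ∑ q ∈ Finset.Icc 1 (l - 1), c q * (min (m - 1) (n - 1) * (2 * k q)) := by
    rw [Finset.mul_sum, Finset.sum_mul]
    exact Finset.sum_congr rfl fun q _ => by ring
  rw [hL]
  refine Finset.sum_le_sum fun q hq => ?_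
  refine Nat.mul_le_mul le_rfl ?_
  refine main (k q) _ ?_
  intro z hz1 hz2 hz3 hz4 hc hu
  rw [Finset.mem_filter]
  refine ⟨Finset.mem_product.mpr ⟨Finset.mem_Icc.mpr ⟨hz1, hz2⟩, Finset.mem_Icc.mpr ⟨hz3, hz4⟩⟩, ?_, ?_⟩
  · obtain ⟨p, hp, b1, b2⟩ := hc
    refine ⟨π.symm p, hp, ?_, ?_⟩ <;> rw [Equiv.apply_symm_apply] <;> assumption
  · obtain ⟨p, hp, b1, b2⟩ := hu
    refine ⟨π.symm p, hp, ?_, ?_⟩ <;> rw [Equiv.apply_symm_apply] <;> assumption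
end

section
/- Consider an l-layer convolutional network (l > 1) with output of size m×n, where for each output node the receptive field in intermediate layer q has size (2k_q+1)×(2k_q+1), layer q has c_q channels and stride s_q ≥ 1, and let S_q = Π_{r=q}^{l-1} s_r and k'_q = 2k_q + 1 - S_q (assumed positive). Then any serial execution order that disallows recomputation requires at least Σ_{q=1}^{l-1} c_q k'_q · min(S_q·m - 1, S_q·n - 1) memory for intermediate-layer nodes at some point of the execution. -/
lemma adj_pair (m : ℕ) (D : ℕ → Prop) (i1 i2 : ℕ) (h1 : i1 < m) (h2 : i2 < m)
    (hD1 : D i1) (hD2 : ¬ D i2) :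
    ∃ a, a + 1 < m ∧ ((D a ∧ ¬ D (a+1)) ∨ (¬ D a ∧ D (a+1))) := by
  by_contra h
  push_neg at h
  have key : ∀ i, i < m → (D i ↔ D 0) := by
    intro i
    induction i with
    | zero => simp
    | succ j ih =>
      intro hj
      have h1 := h j (by omega)
      have h2 := ih (by omega)
      tauto
  exact hD2 ((key i2 h2).mpr ((key i1 h1).mp hD1))

lemma slab (S k n v : ℤ) (hS : 1 ≤ S) (hk : S ≤ 2*k) (hn : 1 ≤ n)
    (hv1 : S - k ≤ v) (hv2 : v ≤ S*n + k) :
    1 ≤ min n ((v+k)/S) ∧ min n ((v+k)/S) ≤ n ∧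
      S * min n ((v+k)/S) - k ≤ v ∧ v ≤ S * min n ((v+k)/S) + k := by
  have hS0 : 0 < S := by omega
  have hmod := Int.emod_nonneg (v+k) (by omega : S ≠ 0)
  have hmod2 := Int.emod_lt_of_pos (v+k) hS0
  have hdm := Int.mul_ediv_add_emod (v+k) S
  have hvk : S ≤ v + k := by omega
  have hq1 : 1 ≤ (v+k)/S := by
    by_contra hq
    push_neg at hq
    have : S * ((v+k)/S) ≤ S * 0 := mul_le_mul_of_nonneg_left (by omega) (by omega)
    omega
  have hSq : S * ((v+k)/S) ≤ v + k := by omega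
  refine ⟨le_min hn hq1, min_le_left _ _, ?_, ?_⟩
  · have : S * min n ((v+k)/S) ≤ S * ((v+k)/S) :=
      mul_le_mul_of_nonneg_left (min_le_right _ _) (by omega)
    omega
  · rcases le_or_gt ((v+k)/S) n with hqa | hqa
    · rw [min_eq_right hqa]
      omega
    · rw [min_eq_left hqa.le]
      have : S * n ≤ S * ((v+k)/S) := mul_le_mul_of_nonneg_left hqa.le (by omega)
      omega

lemma core (S k m n : ℤ) (hS : 1 ≤ S) (hk : S ≤ 2*k) (hm : 2 ≤ m) (hn : 1 ≤ n)
    (P : ℤ → ℤ → Prop) [DecidablePred fun x : ℤ × ℤ => P x.1 x.2]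
    (hP : ∀ b, 1 ≤ b → b ≤ n → ∃ a, 1 ≤ a ∧ a + 1 ≤ m ∧
      ∀ u v, S*(a+1)-k ≤ u → u ≤ S*a+k → S*b-k ≤ v → v ≤ S*b+k → P u v) :
    (2*k+1-S).toNat * (S*n + (2*k+1-S)).toNat ≤
      (((Finset.Icc (1-k) (S*m+k)) ×ˢ (Finset.Icc (1-k) (S*n+k))).filter
        (fun x => P x.1 x.2)).card := by
  classical
  set k' : ℤ := 2*k+1-S with hk'def
  have hk'pos : 1 ≤ k' := by omega
  -- choice function for columns
  let A : ℤ → ℤ := fun b => if h : 1 ≤ b ∧ b ≤ n then (hP b h.1 h.2).choose else 1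
  have hA : ∀ b, 1 ≤ b → b ≤ n → 1 ≤ A b ∧ A b + 1 ≤ m ∧
      ∀ u v, S*(A b+1)-k ≤ u → u ≤ S*(A b)+k → S*b-k ≤ v → v ≤ S*b+k → P u v := by
    intro b hb1 hb2
    have h : 1 ≤ b ∧ b ≤ n := ⟨hb1, hb2⟩
    simp only [A, dif_pos h]
    exact (hP b h.1 h.2).choose_spec
  let jf : ℤ → ℤ := fun v => min n ((v+k)/S)
  let φ : ℤ × ℤ → ℤ × ℤ := fun p => (S*(A (jf p.2) + 1) - k - 1 + p.1, p.2)
  have hdom : ∀ p ∈ (Finset.Icc 1 k') ×ˢ (Finset.Icc (S-k) (S*n+k)),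
      φ p ∈ ((Finset.Icc (1-k) (S*m+k)) ×ˢ (Finset.Icc (1-k) (S*n+k))).filter
        (fun x => P x.1 x.2) := by
    rintro ⟨u, v⟩ hp
    simp only [Finset.mem_product, Finset.mem_Icc] at hp
    obtain ⟨⟨hu1, hu2⟩, hv1, hv2⟩ := hp
    obtain ⟨hb1, hb2, hvb1, hvb2⟩ := slab S k n v hS hk hn hv1 hv2
    obtain ⟨ha1, ha2, hblock⟩ := hA (jf v) hb1 hb2
    have hes : S*(A (jf v)+1) = S*(A (jf v)) + S := by ring
    have hx1 : S*(A (jf v)+1) - k ≤ S*(A (jf v)+1) - k - 1 + u := by omega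
    have hx2 : S*(A (jf v)+1) - k - 1 + u ≤ S*(A (jf v)) + k := by omega
    simp only [φ, Finset.mem_filter, Finset.mem_product, Finset.mem_Icc]
    refine ⟨⟨⟨?_, ?_⟩, ?_, ?_⟩, ?_⟩
    · have : S * 1 ≤ S * (A (jf v)+1) := mul_le_mul_of_nonneg_left (by omega) (by omega)
      omega
    · have : S * (A (jf v)) ≤ S * m := mul_le_mul_of_nonneg_left (by omega) (by omega)
      omega
    · omega
    · omega
    · exact hblock _ _ hx1 hx2 hvb1 hvb2
  have hinj : Set.InjOn φ ↑((Finset.Icc 1 k') ×ˢ (Finset.Icc (S-k) (S*n+k))) := by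
    rintro ⟨u, v⟩ _ ⟨u', v'⟩ _ h
    simp only [φ, Prod.mk.injEq] at h
    obtain ⟨h1, h2⟩ := h
    subst h2
    have : u = u' := by omega
    simp [this]
  have hcard := Finset.card_le_card_of_injOn φ hdom hinj
  calc (2*k+1-S).toNat * (S*n + (2*k+1-S)).toNat
      = ((Finset.Icc 1 k') ×ˢ (Finset.Icc (S-k) (S*n+k))).card := by
        rw [Finset.card_product, Int.card_Icc, Int.card_Icc]
        congr 1
        · congr 1; omega
        · congr 1; omega
    _ ≤ _ := hcard


lemma card_swap (s t : Finset ℤ) (P : ℤ → ℤ → Prop)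
    [DecidablePred fun x : ℤ × ℤ => P x.1 x.2]
    [DecidablePred fun x : ℤ × ℤ => P x.2 x.1] :
    ((s ×ˢ t).filter (fun x => P x.1 x.2)).card =
      ((t ×ˢ s).filter (fun x => P x.2 x.1)).card := by
  apply Finset.card_bij (fun x _ => (x.2, x.1))
  · rintro ⟨u, v⟩ h
    simp only [Finset.mem_filter, Finset.mem_product] at h ⊢
    tauto
  · rintro ⟨u, v⟩ _ ⟨u', v'⟩ _ h
    simp only [Prod.mk.injEq] at h ⊢
    tauto
  · rintro ⟨u, v⟩ h
    refine ⟨(v, u), ?_, rfl⟩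
    simp only [Finset.mem_filter, Finset.mem_product] at h ⊢
    tauto

lemma lemA (m n : ℕ) (hm : 2 ≤ m) (hn : 2 ≤ n) (π : Fin (m*n) ≃ Fin m × Fin n) :
    ∃ t, t ≤ m*n ∧
      ((∀ j : Fin n, (∃ i : Fin m, ((π.symm (i,j)) : Fin (m*n)).val < t) ∧
          (∃ i : Fin m, ¬ ((π.symm (i,j)) : Fin (m*n)).val < t)) ∨
       (∀ i : Fin m, (∃ j : Fin n, ((π.symm (i,j)) : Fin (m*n)).val < t) ∧
          (∃ j : Fin n, ¬ ((π.symm (i,j)) : Fin (m*n)).val < t))) := by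
  have h0m : 0 < m := by omega
  have h0n : 0 < n := by omega
  haveI : Nonempty (Fin m) := ⟨⟨0, h0m⟩⟩
  haveI : Nonempty (Fin n) := ⟨⟨0, h0n⟩⟩
  set val : Fin m → Fin n → ℕ := fun i j => ((π.symm (i,j)) : Fin (m*n)).val with hval
  have hinj : ∀ i j i' j', val i j = val i' j' → i = i' ∧ j = j' := by
    intro i j i' j' h
    have h2 : π.symm (i,j) = π.symm (i',j') := Fin.val_injective h
    have h3 : ((i,j) : Fin m × Fin n) = (i',j') := π.symm.injective h2
    exact ⟨congrArg Prod.fst h3, congrArg Prod.snd h3⟩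
  set F : Fin m → ℕ := fun i => Finset.univ.sup (fun j => val i j + 1) with hF
  set G : Fin n → ℕ := fun j => Finset.univ.sup (fun i => val i j + 1) with hG
  have hvalF : ∀ i j, val i j < F i := by
    intro i j
    have h : (fun j => val i j + 1) j ≤ Finset.univ.sup (fun j => val i j + 1) :=
      Finset.le_sup (f := fun j => val i j + 1) (Finset.mem_univ j)
    exact Nat.lt_of_lt_of_le (Nat.lt_succ_self _) h
  have hvalG : ∀ i j, val i j < G j := by
    intro i j
    have h : (fun i => val i j + 1) i ≤ Finset.univ.sup (fun i => val i j + 1) :=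
      Finset.le_sup (f := fun i => val i j + 1) (Finset.mem_univ i)
    exact Nat.lt_of_lt_of_le (Nat.lt_succ_self _) h
  have hFbound : ∀ i, F i ≤ m*n := by
    intro i
    apply Finset.sup_le
    intro j _
    exact Nat.succ_le_of_lt (π.symm (i,j)).isLt
  obtain ⟨i₀, -, hi₀⟩ := Finset.exists_min_image Finset.univ F ⟨⟨0,h0m⟩, Finset.mem_univ _⟩
  obtain ⟨j₀, -, hj₀⟩ := Finset.exists_min_image Finset.univ G ⟨⟨0,h0n⟩, Finset.mem_univ _⟩
  have hFattain : ∀ i : Fin m, ∃ j, F i = val i j + 1 := by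
    intro i
    obtain ⟨j, -, hj⟩ := Finset.exists_mem_eq_sup Finset.univ
      (Finset.univ_nonempty) (fun j => val i j + 1)
    exact ⟨j, hj⟩
  have hGattain : ∀ j : Fin n, ∃ i, G j = val i j + 1 := by
    intro j
    obtain ⟨i, -, hi⟩ := Finset.exists_mem_eq_sup Finset.univ
      (Finset.univ_nonempty) (fun i => val i j + 1)
    exact ⟨i, hi⟩
  rcases lt_trichotomy (F i₀) (G j₀) with hlt | heq | hgt
  · -- rows complete first: all columns mixed at t = F i₀
    refine ⟨F i₀, hFbound i₀, Or.inl fun j => ⟨⟨i₀, hvalF i₀ j⟩, ?_⟩⟩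
    obtain ⟨i, hi⟩ := hGattain j
    have h2 := hj₀ j (Finset.mem_univ j)
    refine ⟨i, ?_⟩
    show ¬ val i j < F i₀
    omega
  · -- simultaneous: t = F i₀ - 1, all columns mixed
    obtain ⟨js, hjs⟩ := hFattain i₀
    obtain ⟨is, his⟩ := hGattain j₀
    have h1 : val i₀ js = val is j₀ := by omega
    obtain ⟨h2, h3⟩ := hinj _ _ _ _ h1
    rw [h3] at hjs
    refine ⟨F i₀ - 1, by have := hFbound i₀; omega, Or.inl fun j => ⟨?_, ?_⟩⟩
    · by_cases hj : j = j₀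
      · subst hj
        haveI : Nontrivial (Fin m) := Fin.nontrivial_iff_two_le.mpr hm
        obtain ⟨i, hine⟩ := exists_ne i₀
        refine ⟨i, ?_⟩
        have ha : val i j < G j := hvalG i j
        have hb : val i j ≠ val i₀ j := fun h => hine (hinj _ _ _ _ h).1
        show val i j < F i₀ - 1
        omega
      · refine ⟨i₀, ?_⟩
        have ha : val i₀ j < F i₀ := hvalF i₀ j
        have hb : val i₀ j ≠ val i₀ j₀ := fun h => hj (hinj _ _ _ _ h).2
        show val i₀ j < F i₀ - 1
        omega
    · obtain ⟨i, hi⟩ := hGattain j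
      have h4 := hj₀ j (Finset.mem_univ j)
      refine ⟨i, ?_⟩
      show ¬ val i j < F i₀ - 1
      omega
  · -- columns complete first: all rows mixed at t = G j₀
    have hGbound : ∀ j, G j ≤ m*n := by
      intro j
      apply Finset.sup_le
      intro i _
      exact Nat.succ_le_of_lt (π.symm (i,j)).isLt
    refine ⟨G j₀, hGbound j₀, Or.inr fun i => ⟨⟨j₀, hvalG i j₀⟩, ?_⟩⟩
    obtain ⟨j, hj⟩ := hFattain i
    have h2 := hi₀ i (Finset.mem_univ i)
    refine ⟨j, ?_⟩
    show ¬ val i j < G j₀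
    omega

/-- Proposition 2: strided generalization of Proposition 1.
With S_q = Π_{r=q}^{l-1} s_r and k'_q = 2k_q+1-S_q > 0, any serial execution
order requires at least Σ c_q k'_q · min(S_q·m - 1, S_q·n - 1) resident
intermediate nodes at some point. Output (i,j) depends on intermediate node
(i',j') of layer q iff |i' - S_q·i| ≤ k_q and |j' - S_q·j| ≤ k_q. -/
theorem stmt_6 (l m n : ℕ) (hl : 1 < l) (hm : 2 ≤ m) (hn : 2 ≤ n)
    (c k s : ℕ → ℕ) (hs : ∀ q, 1 ≤ s q)
    (Sq : ℕ → ℕ) (hSq : ∀ q, Sq q = ∏ r ∈ Finset.Icc q (l - 1), s r)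
    (hk : ∀ q ∈ Finset.Icc 1 (l - 1), 0 < k q)
    (hk' : ∀ q ∈ Finset.Icc 1 (l - 1), Sq q < 2 * k q + 1)
    (π : Fin (m * n) ≃ Fin m × Fin n) :
    ∃ t ≤ m * n,
      (∑ q ∈ Finset.Icc 1 (l - 1),
          c q * (2 * k q + 1 - Sq q) * min (Sq q * m - 1) (Sq q * n - 1)) ≤
        ∑ q ∈ Finset.Icc 1 (l - 1), c q *
          ((Finset.Icc (1 - (k q : ℤ)) ((Sq q : ℤ) * m + k q) ×ˢ
            Finset.Icc (1 - (k q : ℤ)) ((Sq q : ℤ) * n + k q)).filter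
            (fun x =>
              (∃ τ : Fin (m * n), τ.val < t ∧
                |x.1 - (Sq q : ℤ) * (((π τ).1.val : ℤ) + 1)| ≤ (k q : ℤ) ∧
                |x.2 - (Sq q : ℤ) * (((π τ).2.val : ℤ) + 1)| ≤ (k q : ℤ)) ∧
              (∃ τ : Fin (m * n), ¬ τ.val < t ∧
                |x.1 - (Sq q : ℤ) * (((π τ).1.val : ℤ) + 1)| ≤ (k q : ℤ) ∧
                |x.2 - (Sq q : ℤ) * (((π τ).2.val : ℤ) + 1)| ≤ (k q : ℤ)))).card := by
  obtain ⟨t, ht, hmix⟩ := lemA m n hm hn π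
  refine ⟨t, ht, Finset.sum_le_sum ?_⟩
  intro q hq
  have hS2 : Sq q < 2 * k q + 1 := hk' q hq
  have hS1 : 1 ≤ Sq q := by
    rw [hSq]; exact Finset.one_le_prod' (fun r _ => hs r)
  have hS1' : (1 : ℤ) ≤ (Sq q : ℤ) := by exact_mod_cast hS1
  have hS2' : ((Sq q : ℤ)) ≤ 2 * (k q : ℤ) := by exact_mod_cast (by omega : Sq q ≤ 2 * k q)
  have hm' : (2 : ℤ) ≤ (m : ℤ) := by exact_mod_cast hm
  have hn' : (2 : ℤ) ≤ (n : ℤ) := by exact_mod_cast hn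
  -- the live predicate
  set P : ℤ → ℤ → Prop := fun u v =>
      (∃ τ : Fin (m * n), τ.val < t ∧
        |u - (Sq q : ℤ) * (((π τ).1.val : ℤ) + 1)| ≤ (k q : ℤ) ∧
        |v - (Sq q : ℤ) * (((π τ).2.val : ℤ) + 1)| ≤ (k q : ℤ)) ∧
      (∃ τ : Fin (m * n), ¬ τ.val < t ∧
        |u - (Sq q : ℤ) * (((π τ).1.val : ℤ) + 1)| ≤ (k q : ℤ) ∧
        |v - (Sq q : ℤ) * (((π τ).2.val : ℤ) + 1)| ≤ (k q : ℤ)) with hPdef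
  rw [mul_assoc]
  apply Nat.mul_le_mul_left
  -- helper for covering conditions
  have hcover : ∀ (i : Fin m) (j : Fin n) (u v : ℤ),
      |u - (Sq q : ℤ) * ((i.val : ℤ) + 1)| ≤ (k q : ℤ) →
      |v - (Sq q : ℤ) * ((j.val : ℤ) + 1)| ≤ (k q : ℤ) →
      (((π.symm (i, j)) : Fin (m*n)).val < t →
        (∃ τ : Fin (m * n), τ.val < t ∧
          |u - (Sq q : ℤ) * (((π τ).1.val : ℤ) + 1)| ≤ (k q : ℤ) ∧
          |v - (Sq q : ℤ) * (((π τ).2.val : ℤ) + 1)| ≤ (k q : ℤ))) ∧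
      (¬ ((π.symm (i, j)) : Fin (m*n)).val < t →
        (∃ τ : Fin (m * n), ¬ τ.val < t ∧
          |u - (Sq q : ℤ) * (((π τ).1.val : ℤ) + 1)| ≤ (k q : ℤ) ∧
          |v - (Sq q : ℤ) * (((π τ).2.val : ℤ) + 1)| ≤ (k q : ℤ))) := by
    intro i j u v h1 h2
    have hπ : π (π.symm (i, j)) = (i, j) := Equiv.apply_symm_apply π (i, j)
    constructor
    · intro hc
      refine ⟨π.symm (i, j), hc, ?_, ?_⟩ <;> rw [hπ]
      · exact h1
      · exact h2
    · intro hc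
      refine ⟨π.symm (i, j), hc, ?_, ?_⟩ <;> rw [hπ]
      · exact h1
      · exact h2
  rcases hmix with hcol | hrow
  · -- all columns mixed: use core directly
    have hP : ∀ b : ℤ, 1 ≤ b → b ≤ (n : ℤ) → ∃ a : ℤ, 1 ≤ a ∧ a + 1 ≤ (m : ℤ) ∧
        ∀ u v, (Sq q : ℤ)*(a+1)-(k q : ℤ) ≤ u → u ≤ (Sq q : ℤ)*a+(k q : ℤ) →
          (Sq q : ℤ)*b-(k q : ℤ) ≤ v → v ≤ (Sq q : ℤ)*b+(k q : ℤ) → P u v := by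
      intro b hb1 hb2
      lift b to ℕ using (by omega) with bb
      set j : Fin n := ⟨bb - 1, by omega⟩ with hjdef
      have hjb : ((j.val : ℤ)) + 1 = (bb : ℤ) := by
        have : (1:ℕ) ≤ bb := by exact_mod_cast hb1
        simp only [hjdef]
        push_cast
        omega
      obtain ⟨⟨i1, hc1⟩, ⟨i2, hc2⟩⟩ := hcol j
      have hD := adj_pair m (fun i => ∃ h : i < m, ((π.symm (⟨i,h⟩, j)) : Fin (m*n)).val < t)
        i1.val i2.val i1.isLt i2.isLt ⟨i1.isLt, hc1⟩ (by rintro ⟨h, hlt⟩; exact hc2 hlt)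
      obtain ⟨a, ha, hcase⟩ := hD
      refine ⟨(a : ℤ) + 1, by omega, by push_cast; omega, ?_⟩
      intro u v hu1 hu2 hv1 hv2
      have hSe : (Sq q : ℤ) * (((a:ℤ)+1)+1) = (Sq q : ℤ) * ((a:ℤ)+1) + (Sq q : ℤ) := by ring
      have A1 : |u - (Sq q : ℤ) * ((a:ℤ)+1)| ≤ (k q : ℤ) := by rw [abs_le]; omega
      have A2 : |u - (Sq q : ℤ) * (((a:ℤ)+1)+1)| ≤ (k q : ℤ) := by rw [abs_le]; omega
      have B : |v - (Sq q : ℤ) * ((bb:ℤ))| ≤ (k q : ℤ) := by rw [abs_le]; omega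
      set fa : Fin m := ⟨a, by omega⟩ with hfa
      set fa' : Fin m := ⟨a+1, ha⟩ with hfa'
      have hA1' : |u - (Sq q : ℤ) * ((fa.val : ℤ)+1)| ≤ (k q : ℤ) := A1
      have hA2' : |u - (Sq q : ℤ) * ((fa'.val : ℤ)+1)| ≤ (k q : ℤ) := by
        have e : ((fa'.val : ℤ)) + 1 = ((a:ℤ)+1)+1 := by simp only [hfa']; push_cast; ring
        rw [e]; exact A2
      have hB' : |v - (Sq q : ℤ) * ((j.val : ℤ)+1)| ≤ (k q : ℤ) := by rw [hjb]; exact B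
      have hcov1 := hcover fa j u v hA1' hB'
      have hcov2 := hcover fa' j u v hA2' hB'
      rcases hcase with ⟨hda, hda'⟩ | ⟨hda, hda'⟩
      · obtain ⟨_, hlt⟩ := hda
        exact ⟨hcov1.1 hlt, hcov2.2 (by rintro hlt2; exact hda' ⟨ha, hlt2⟩)⟩
      · obtain ⟨_, hlt⟩ := hda'
        exact ⟨hcov2.1 hlt, hcov1.2 (by rintro hlt2; exact hda ⟨fa.isLt, hlt2⟩)⟩
    have hcore := core (Sq q : ℤ) (k q : ℤ) (m : ℤ) (n : ℤ) hS1' hS2' hm' (by omega : (1:ℤ) ≤ (n:ℤ)) P hP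
    refine le_trans (Nat.mul_le_mul ?_ ?_) hcore
    · omega
    · have e : ((Sq q:ℤ)*(n:ℤ) + (2*(k q:ℤ)+1-(Sq q:ℤ)))
          = ((Sq q * n : ℕ):ℤ) + (2*(k q:ℤ)+1-(Sq q:ℤ)) := by push_cast; ring
      rw [e]
      refine le_trans (min_le_right _ _) ?_
      generalize Sq q * n = A
      omega
  · -- all rows mixed: use core on the swapped picture
    have hP : ∀ b : ℤ, 1 ≤ b → b ≤ (m : ℤ) → ∃ a : ℤ, 1 ≤ a ∧ a + 1 ≤ (n : ℤ) ∧
        ∀ u v, (Sq q : ℤ)*(a+1)-(k q : ℤ) ≤ u → u ≤ (Sq q : ℤ)*a+(k q : ℤ) →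
          (Sq q : ℤ)*b-(k q : ℤ) ≤ v → v ≤ (Sq q : ℤ)*b+(k q : ℤ) → P v u := by
      intro b hb1 hb2
      lift b to ℕ using (by omega) with bb
      set i : Fin m := ⟨bb - 1, by omega⟩ with hidef
      have hib : ((i.val : ℤ)) + 1 = (bb : ℤ) := by
        have : (1:ℕ) ≤ bb := by exact_mod_cast hb1
        simp only [hidef]
        push_cast
        omega
      obtain ⟨⟨j1, hc1⟩, ⟨j2, hc2⟩⟩ := hrow i
      have hD := adj_pair n (fun j => ∃ h : j < n, ((π.symm (i, ⟨j,h⟩)) : Fin (m*n)).val < t)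
        j1.val j2.val j1.isLt j2.isLt ⟨j1.isLt, hc1⟩ (by rintro ⟨h, hlt⟩; exact hc2 hlt)
      obtain ⟨a, ha, hcase⟩ := hD
      refine ⟨(a : ℤ) + 1, by omega, by push_cast; omega, ?_⟩
      intro u v hu1 hu2 hv1 hv2
      have hSe : (Sq q : ℤ) * (((a:ℤ)+1)+1) = (Sq q : ℤ) * ((a:ℤ)+1) + (Sq q : ℤ) := by ring
      have A1 : |u - (Sq q : ℤ) * ((a:ℤ)+1)| ≤ (k q : ℤ) := by rw [abs_le]; omega
      have A2 : |u - (Sq q : ℤ) * (((a:ℤ)+1)+1)| ≤ (k q : ℤ) := by rw [abs_le]; omega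
      have B : |v - (Sq q : ℤ) * ((bb:ℤ))| ≤ (k q : ℤ) := by rw [abs_le]; omega
      set fa : Fin n := ⟨a, by omega⟩ with hfa
      set fa' : Fin n := ⟨a+1, ha⟩ with hfa'
      have hA1' : |u - (Sq q : ℤ) * ((fa.val : ℤ)+1)| ≤ (k q : ℤ) := A1
      have hA2' : |u - (Sq q : ℤ) * ((fa'.val : ℤ)+1)| ≤ (k q : ℤ) := by
        have e : ((fa'.val : ℤ)) + 1 = ((a:ℤ)+1)+1 := by simp only [hfa']; push_cast; ring
        rw [e]; exact A2
      have hB' : |v - (Sq q : ℤ) * ((i.val : ℤ)+1)| ≤ (k q : ℤ) := by rw [hib]; exact B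
      have hcov1 := hcover i fa v u hB' hA1'
      have hcov2 := hcover i fa' v u hB' hA2'
      rcases hcase with ⟨hda, hda'⟩ | ⟨hda, hda'⟩
      · obtain ⟨_, hlt⟩ := hda
        exact ⟨hcov1.1 hlt, hcov2.2 (by rintro hlt2; exact hda' ⟨ha, hlt2⟩)⟩
      · obtain ⟨_, hlt⟩ := hda'
        exact ⟨hcov2.1 hlt, hcov1.2 (by rintro hlt2; exact hda ⟨fa.isLt, hlt2⟩)⟩
    have hcore := core (Sq q : ℤ) (k q : ℤ) (n : ℤ) (m : ℤ) hS1' hS2' hn' (by omega : (1:ℤ) ≤ (m:ℤ))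
      (fun u v => P v u) hP
    have hswap := card_swap (Finset.Icc (1-(k q : ℤ)) ((Sq q : ℤ)*(m:ℤ)+(k q : ℤ)))
      (Finset.Icc (1-(k q : ℤ)) ((Sq q : ℤ)*(n:ℤ)+(k q : ℤ))) P
    rw [hswap]
    refine le_trans (Nat.mul_le_mul ?_ ?_) hcore
    · omega
    · have e : ((Sq q:ℤ)*(m:ℤ) + (2*(k q:ℤ)+1-(Sq q:ℤ)))
          = ((Sq q * m : ℕ):ℤ) + (2*(k q:ℤ)+1-(Sq q:ℤ)) := by push_cast; ring
      rw [e]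
      refine le_trans (min_le_left _ _) ?_
      generalize Sq q * m = A
      omega
end
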